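/- Let W*(z) = Γ(0, 4πy) e^{4πy} e^{2πiz} for z = x + iy in the upper half plane and let Δ = -y²(∂²/∂x² + ∂²/∂y²) be the hyperbolic Laplacian. Then for n ≥ 1, Δ W*(nz) = -e^{2πinz}. -/

import Mathlib

/-!
Write `W*(nz) = G(y) e^{cz}` with `c = 2πin`, `m = 4πn` and `G(y) = Γ(0,my) e^{my}`. For any
`B(y) e^{cz}` the second `x`- and `y`-derivatives contribute `c²B` and `(ic)²B`, which cancel, so
`Δ(B(y) e^{cz}) = -y² (B'' + 2icB') e^{cz}`. Here `2ic = -m`, and `Γ(0,a)' = -e^{-a}/a` gives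
`G' = mG - 1/y`, hence `G'' - mG' = 1/y²` and `Δ W*(nz) = -e^{cz}`.
-/

open Real MeasureTheory Set Complex

/-- The incomplete gamma function `Γ(0,a) = ∫_a^∞ e^{-t} t^{-1} dt`. -/
noncomputable def incGammaZero (a : ℝ) : ℝ := ∫ t in Ioi a, Real.exp (-t) / t

/-- `W*(z) = Γ(0,4πy) e^{4πy} e^{2πiz}` for `z = x+iy`. -/
noncomputable def Wstar (z : ℂ) : ℂ :=
  (incGammaZero (4 * π * z.im) : ℂ) * Real.exp (4 * π * z.im) * Complex.exp (2 * π * I * z)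

/-- The hyperbolic Laplacian `Δ = -y²(∂²/∂x² + ∂²/∂y²)`. -/
noncomputable def hypLap (f : ℂ → ℂ) (z : ℂ) : ℂ :=
  -(z.im : ℂ) ^ 2 * (fderiv ℝ (fun w => fderiv ℝ f w 1) z 1
    + fderiv ℝ (fun w => fderiv ℝ f w I) z I)

open Filter Topology

theorem hasDerivAt_integral_Ioi {E : Type*} [NormedAddCommGroup E] [NormedSpace ℝ E]
    [CompleteSpace E] {f : ℝ → E} {a b : ℝ} (hf : IntegrableOn f (Ioi b)) (hba : b < a)
    (hfa : ContinuousAt f a) :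
    HasDerivAt (fun x => ∫ t in Ioi x, f t) (-f a) a := by
  have htail : (fun x => ∫ t in Ioi x, f t) =ᶠ[𝓝 a]
      fun x => (∫ t in Ioi b, f t) - ∫ t in b..x, f t := by
    filter_upwards [Ioi_mem_nhds hba] with x hx
    rw [← intervalIntegral.integral_Ioi_sub_Ioi hf hx.le, sub_sub_cancel]
  have hint : IntervalIntegrable f volume b a :=
    (intervalIntegrable_iff_integrableOn_Ioc_of_le hba.le).2 (hf.mono_set Ioc_subset_Ioi_self)
  have hmeas : StronglyMeasurableAtFilter f (𝓝 a) :=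
    AEStronglyMeasurable.stronglyMeasurableAtFilter_of_mem hf.aestronglyMeasurable
      (Ioi_mem_nhds hba)
  simpa using ((intervalIntegral.integral_hasDerivAt_right hint hmeas hfa).const_sub
    (∫ t in Ioi b, f t)).congr_of_eventuallyEq htail

theorem integrableOn_exp_neg_div_Ioi {b : ℝ} (hb : 0 < b) :
    IntegrableOn (fun t => Real.exp (-t) / t) (Ioi b) := by
  refine ((integrableOn_exp_neg_Ioi b).div_const b).mono'
    ((by fun_prop : Measurable fun t : ℝ => Real.exp (-t) / t).aestronglyMeasurable) ?_
  filter_upwards [ae_restrict_mem measurableSet_Ioi] with t ht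
  rw [Real.norm_of_nonneg (div_nonneg (Real.exp_pos _).le (hb.trans ht).le)]
  exact div_le_div_of_nonneg_left (Real.exp_pos _).le hb ht.le

theorem hasDerivAt_incGammaZero {a : ℝ} (ha : 0 < a) :
    HasDerivAt incGammaZero (-(Real.exp (-a) / a)) a :=
  hasDerivAt_integral_Ioi (integrableOn_exp_neg_div_Ioi (half_pos ha)) (half_lt_self ha)
    (by fun_prop (disch := exact ha.ne'))

theorem hasDerivAt_incGammaZero_mul_exp {m y : ℝ} (hm : 0 < m) (hy : 0 < y) :
    HasDerivAt (fun u => incGammaZero (m * u) * Real.exp (m * u))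
      (m * (incGammaZero (m * y) * Real.exp (m * y)) - y⁻¹) y := by
  have hmy : HasDerivAt (fun u : ℝ => m * u) m y := by simpa using (hasDerivAt_id y).const_mul m
  refine (((hasDerivAt_incGammaZero (mul_pos hm hy)).comp y hmy).mul
    ((Real.hasDerivAt_exp (m * y)).comp y hmy)).congr_deriv ?_
  simp only [Function.comp_apply, Real.exp_neg]
  field_simp
  ring

section ImMulCexp

variable {B B' : ℝ → ℂ} {b b'' z : ℂ}

theorem fderiv_comp_im_mul_cexp_apply (hB : HasDerivAt B b z.im) (c v : ℂ) :
    fderiv ℝ (fun w => B w.im * cexp (c * w)) z v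
      = (b * v.im + B z.im * (c * v)) * cexp (c * z) := by
  have hexp : HasDerivAt (fun w => cexp (c * w)) (cexp (c * z) * c) z := by
    simpa using ((hasDerivAt_id z).const_mul c).cexp
  have hBim : HasFDerivAt (fun w : ℂ => B w.im)
      ((ContinuousLinearMap.toSpanSingleton ℝ b).comp imCLM) z :=
    hB.hasFDerivAt.comp z imCLM.hasFDerivAt
  rw [(hBim.fun_mul (hexp.hasFDerivAt.restrictScalars ℝ)).fderiv]
  simp only [add_apply, smul_apply, ContinuousLinearMap.coe_restrictScalars',
    ContinuousLinearMap.toSpanSingleton_apply, smul_eq_mul, ContinuousLinearMap.comp_apply,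
    imCLM_apply, real_smul]
  ring

theorem fderiv_fderiv_comp_im_mul_cexp_apply (hB : ∀ᶠ y in 𝓝 z.im, HasDerivAt B (B' y) y)
    (hB' : HasDerivAt B' b'' z.im) (c v : ℂ) :
    fderiv ℝ (fun w => fderiv ℝ (fun w => B w.im * cexp (c * w)) w v) z v
      = (b'' * v.im ^ 2 + 2 * B' z.im * (c * v) * v.im + B z.im * (c * v) ^ 2)
        * cexp (c * z) := by
  have hfirst : (fun w => fderiv ℝ (fun w => B w.im * cexp (c * w)) w v) =ᶠ[𝓝 z]
      fun w => (B' w.im * v.im + B w.im * (c * v)) * cexp (c * w) := by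
    filter_upwards [continuous_im.continuousAt.eventually hB] with w hw
    exact fderiv_comp_im_mul_cexp_apply hw c v
  rw [hfirst.fderiv_eq, fderiv_comp_im_mul_cexp_apply (B := fun y => B' y * v.im + B y * (c * v))
    ((hB'.mul_const _).add (hB.self_of_nhds.mul_const _))]
  ring

theorem hypLap_comp_im_mul_cexp (hB : ∀ᶠ y in 𝓝 z.im, HasDerivAt B (B' y) y)
    (hB' : HasDerivAt B' b'' z.im) (c : ℂ) :
    hypLap (fun w => B w.im * cexp (c * w)) z
      = -(z.im : ℂ) ^ 2 * (b'' + 2 * I * c * B' z.im) * cexp (c * z) := by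
  rw [hypLap, fderiv_fderiv_comp_im_mul_cexp_apply hB hB',
    fderiv_fderiv_comp_im_mul_cexp_apply hB hB']
  simp only [one_im, I_im, ofReal_zero, ofReal_one]
  linear_combination (-(z.im : ℂ) ^ 2 * B z.im * c ^ 2 * cexp (c * z)) * I_sq

end ImMulCexp

/-- For `n ≥ 1` and `z` in the upper half plane, `Δ W*(nz) = -e^{2πinz}`. -/
theorem hypLap_Wstar (n : ℕ) (hn : 1 ≤ n) (z : ℂ) (hz : 0 < z.im) :
    hypLap (fun w => Wstar (n * w)) z = -Complex.exp (2 * π * I * n * z) := by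
  set m : ℝ := 4 * π * n with hm_def
  have hm : 0 < m := by
    have : (0 : ℝ) < n := by exact_mod_cast hn
    positivity
  set G : ℝ → ℝ := fun y => incGammaZero (m * y) * Real.exp (m * y) with hG_def
  have hG : ∀ y, 0 < y → HasDerivAt G (m * G y - y⁻¹) y := fun y hy =>
    hasDerivAt_incGammaZero_mul_exp hm hy
  have hG' : HasDerivAt (fun y => m * G y - y⁻¹)
      (m * (m * G z.im - z.im⁻¹) + (z.im ^ 2)⁻¹) z.im :=
    (((hG _ hz).const_mul m).fun_sub (hasDerivAt_inv hz.ne')).congr_deriv (by ring)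
  have hW : (fun w => Wstar (n * w)) = fun w => (G w.im : ℂ) * cexp (2 * π * I * n * w) := by
    funext w
    simp [Wstar, hG_def, hm_def, mul_assoc]
  have hlap := hypLap_comp_im_mul_cexp (B := fun y => (G y : ℂ))
    (B' := fun y => ((m * G y - y⁻¹ : ℝ) : ℂ))
    (by filter_upwards [Ioi_mem_nhds hz] with y hy using (hG y hy).ofReal_comp)
    hG'.ofReal_comp (2 * π * I * n)
  have hc : 2 * I * (2 * π * I * n) = -(m : ℂ) := by
    push_cast [hm_def]
    linear_combination (4 * π * n : ℂ) * I_sq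
  have hy : (z.im : ℂ) ≠ 0 := by exact_mod_cast hz.ne'
  rw [hW, hlap, hc]
  push_cast
  field_simp
  ring
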